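/- Let A ∈ M_n(F) and B ∈ M_{n×m}(F) with Kalman decomposition T⁻¹AT = [[H,X],[0,Y]], T⁻¹B = [[B₁],[0]]. Then charpoly(A) = charpoly(H)·charpoly(Y), and the uncontrollable factor charpoly(Y) is independent of the choice of T: if T' is another invertible matrix giving a Kalman decomposition with blocks H', Y', then charpoly(Y') = charpoly(Y). -/

import Mathlib

open Matrix Submodule

/-!
The factorisation of `charpoly A` is similarity invariance plus block triangularity. For the
second claim, a Kalman decomposition `T` identifies the controllable subspace with the span of the
first `r` columns of `T`: that span is `A`-invariant and contains the columns of `B`, hence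
contains the controllable subspace, and both have dimension `r`. So for two decompositions the
first `r` columns of `T` and `T'` span the same subspace, i.e. `T⁻¹ * T'` is block upper
triangular. It intertwines the two block forms of `A`, so its lower-right block conjugates `Y'`
into `Y`.
-/

section

variable {R : Type*} [CommRing R]

theorem Matrix.charpoly_eq_of_mul_eq_mul {n : Type*} [Fintype n] [DecidableEq n]
    {P M N : Matrix n n R} (hP : IsUnit P.det) (h : P * M = N * P) :
    M.charpoly = N.charpoly := by
  have hM : M = P⁻¹ * N * P := by
    rw [Matrix.mul_assoc, ← h, ← Matrix.mul_assoc, nonsing_inv_mul P hP, Matrix.one_mul]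
  rw [hM]
  exact charpoly_units_conj' (nonsingInvUnit P hP) N

section Krylov

variable {n μ : Type*} [Fintype n] [DecidableEq n]

/-- The controllable subspace when `N` is at least the size of `A`. -/
def krylovSpan (A : Matrix n n R) (B : Matrix n μ R) (N : ℕ) : Submodule R (n → R) :=
  span R {x | ∃ k < N, ∃ j : μ, x = (A ^ k) *ᵥ B.col j}

theorem krylovSpan_le {A : Matrix n n R} {B : Matrix n μ R} {N : ℕ} {V : Submodule R (n → R)}
    (hA : ∀ v ∈ V, A *ᵥ v ∈ V) (hB : ∀ j, B.col j ∈ V) : krylovSpan A B N ≤ V := by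
  have hpow : ∀ k, ∀ v ∈ V, (A ^ k) *ᵥ v ∈ V := by
    intro k
    induction k with
    | zero => simp
    | succ k ih =>
      intro v hv
      rw [pow_succ', ← mulVec_mulVec]
      exact hA _ (ih v hv)
  rw [krylovSpan, span_le]
  rintro _ ⟨k, -, j, rfl⟩
  exact hpow k _ (hB j)

end Krylov

section Blocks

variable {ι κ : Type*}

variable (R ι κ) in
def supportedOnInl : Submodule R (ι ⊕ κ → R) :=
  LinearMap.ker (LinearMap.funLeft R R Sum.inr)

theorem mem_supportedOnInl {v : ι ⊕ κ → R} :
    v ∈ supportedOnInl R ι κ ↔ ∀ i, v (Sum.inr i) = 0 := by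
  simp [supportedOnInl, funext_iff]

theorem finrank_supportedOnInl {F : Type*} [Field F] [Fintype ι] [Fintype κ] :
    Module.finrank F (supportedOnInl F ι κ) = Fintype.card ι := by
  have h := (LinearMap.funLeft F F (Sum.inr : κ → ι ⊕ κ)).finrank_range_add_finrank_ker
  rw [LinearMap.range_eq_top.2 (LinearMap.funLeft_surjective_of_injective _ _ _ Sum.inr_injective),
    finrank_top] at h
  simp only [Module.finrank_fintype_fun_eq_card, Fintype.card_sum] at h
  rw [supportedOnInl]
  omega

variable [Fintype ι] [Fintype κ]

theorem mulVec_mem_supportedOnInl_iff [DecidableEq ι] [DecidableEq κ]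
    {M : Matrix (ι ⊕ κ) (ι ⊕ κ) R} :
    (∀ v ∈ supportedOnInl R ι κ, M *ᵥ v ∈ supportedOnInl R ι κ) ↔ M.toBlocks₂₁ = 0 := by
  simp only [mem_supportedOnInl]
  constructor
  · intro h
    ext i j
    show M (Sum.inr i) (Sum.inl j) = 0
    simpa [mulVec_single_one] using h (Pi.single (Sum.inl j) 1) (by simp) i
  · intro h v hv i
    have hM : ∀ j, M (Sum.inr i) (Sum.inl j) = 0 := fun j => congrFun₂ h i j
    simp [mulVec, dotProduct, Fintype.sum_sum_type, hv, hM]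

theorem toBlocks₂₁_inv_mul_eq_zero [DecidableEq ι] [DecidableEq κ]
    {T T' : Matrix (ι ⊕ κ) (ι ⊕ κ) R} (hT : IsUnit T.det)
    (h : (supportedOnInl R ι κ).map T.mulVecLin = (supportedOnInl R ι κ).map T'.mulVecLin) :
    (T⁻¹ * T').toBlocks₂₁ = 0 := by
  rw [← mulVec_mem_supportedOnInl_iff]
  intro v hv
  obtain ⟨w, hw, hTw⟩ : T' *ᵥ v ∈ (supportedOnInl R ι κ).map T.mulVecLin :=
    h ▸ mem_map_of_mem hv
  rw [← mulVec_mulVec, ← hTw, mulVecLin_apply, mulVec_mulVec, nonsing_inv_mul T hT, one_mulVec]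
  exact hw

theorem charpoly_eq_of_toBlocks₂₁_eq_zero_of_mul_eq_mul [DecidableEq ι] [DecidableEq κ]
    {S : Matrix (ι ⊕ κ) (ι ⊕ κ) R} (hS : IsUnit S.det) (hS₂₁ : S.toBlocks₂₁ = 0)
    {H H' : Matrix ι ι R} {X X' : Matrix ι κ R} {Y Y' : Matrix κ κ R}
    (h : S * fromBlocks H' X' 0 Y' = fromBlocks H X 0 Y * S) :
    Y'.charpoly = Y.charpoly := by
  rw [← fromBlocks_toBlocks S, hS₂₁] at hS h
  rw [det_fromBlocks_zero₂₁] at hS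
  have h₂₂ := congrArg toBlocks₂₂ h
  simp only [fromBlocks_multiply, toBlocks_fromBlocks₂₂, Matrix.zero_mul, Matrix.mul_zero,
    zero_add, add_zero] at h₂₂
  exact charpoly_eq_of_mul_eq_mul (isUnit_of_mul_isUnit_right hS) h₂₂

theorem krylovSpan_eq_map_supportedOnInl {F : Type*} [Field F] [DecidableEq ι] [DecidableEq κ]
    {μ : Type*} {A T : Matrix (ι ⊕ κ) (ι ⊕ κ) F} {B : Matrix (ι ⊕ κ) μ F} {N : ℕ}
    (hr : Module.finrank F (krylovSpan A B N) = Fintype.card ι) (hT : IsUnit T.det)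
    (hA : (T⁻¹ * A * T).toBlocks₂₁ = 0) (hB : (T⁻¹ * B).toRows₂ = 0) :
    krylovSpan A B N = (supportedOnInl F ι κ).map T.mulVecLin := by
  have hTT : T * T⁻¹ = 1 := mul_nonsing_inv T hT
  have hle : krylovSpan A B N ≤ (supportedOnInl F ι κ).map T.mulVecLin := by
    refine krylovSpan_le ?_ fun j => ⟨(T⁻¹ * B).col j, ?_, ?_⟩
    · rintro _ ⟨w, hw, rfl⟩
      refine ⟨(T⁻¹ * A * T) *ᵥ w, mulVec_mem_supportedOnInl_iff.2 hA w hw, ?_⟩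
      simp only [mulVecLin_apply, mulVec_mulVec, ← Matrix.mul_assoc, hTT, Matrix.one_mul]
    · exact mem_supportedOnInl.2 fun i => congrFun₂ hB i j
    · change (T * (T⁻¹ * B)).col j = B.col j
      rw [← Matrix.mul_assoc, hTT, Matrix.one_mul]
  have hinj : Function.Injective T.mulVecLin :=
    mulVec_injective_iff_isUnit.2 ((isUnit_iff_isUnit_det T).2 hT)
  refine eq_of_le_of_finrank_le hle ?_
  rw [hr, ← (equivMapOfInjective _ hinj _).finrank_eq, finrank_supportedOnInl]

end Blocks

end

/-- For any Kalman decomposition, `charpoly A = charpoly H · charpoly Y`, and the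
uncontrollable factor `charpoly Y` does not depend on the choice of the decomposition. -/
theorem stmt19 {F : Type*} [Field F] {r s m : ℕ}
    (A : Matrix (Fin r ⊕ Fin s) (Fin r ⊕ Fin s) F)
    (B : Matrix (Fin r ⊕ Fin s) (Fin m) F)
    (hr : Module.finrank F
      (span F {x | ∃ k < r + s, ∃ j : Fin m, x = (A ^ k) *ᵥ (fun i => B i j)}) = r)
    (T T' : Matrix (Fin r ⊕ Fin s) (Fin r ⊕ Fin s) F)
    (hT : IsUnit T.det) (hT' : IsUnit T'.det)
    (H H' : Matrix (Fin r) (Fin r) F) (X X' : Matrix (Fin r) (Fin s) F)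
    (Y Y' : Matrix (Fin s) (Fin s) F) (B₁ B₁' : Matrix (Fin r) (Fin m) F)
    (hA : T⁻¹ * A * T = Matrix.fromBlocks H X 0 Y)
    (hB : T⁻¹ * B = Matrix.fromRows B₁ 0)
    (hA' : T'⁻¹ * A * T' = Matrix.fromBlocks H' X' 0 Y')
    (hB' : T'⁻¹ * B = Matrix.fromRows B₁' 0) :
    A.charpoly = H.charpoly * Y.charpoly ∧ Y'.charpoly = Y.charpoly := by
  have hr' : Module.finrank F (krylovSpan A B (r + s)) = Fintype.card (Fin r) := by
    rw [Fintype.card_fin]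
    exact hr
  have hC := krylovSpan_eq_map_supportedOnInl hr' hT
    (by rw [hA, toBlocks_fromBlocks₂₁]) (by rw [hB, toRows₂_fromRows])
  have hC' := krylovSpan_eq_map_supportedOnInl hr' hT'
    (by rw [hA', toBlocks_fromBlocks₂₁]) (by rw [hB', toRows₂_fromRows])
  have hS : T⁻¹ * T' * fromBlocks H' X' 0 Y' = fromBlocks H X 0 Y * (T⁻¹ * T') := by
    rw [← hA, ← hA']
    simp only [Matrix.mul_assoc, mul_nonsing_inv_cancel_left _ _ hT',
      mul_nonsing_inv_cancel_left _ _ hT]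
  refine ⟨?_, charpoly_eq_of_toBlocks₂₁_eq_zero_of_mul_eq_mul ?_
    (toBlocks₂₁_inv_mul_eq_zero hT (hC.symm.trans hC')) hS⟩
  · rw [← charpoly_fromBlocks_zero₂₁, ← hA]
    exact (charpoly_units_conj' (nonsingInvUnit T hT) A).symm
  · rw [det_mul]
    exact (isUnit_nonsing_inv_det T hT).mul hT'
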